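/- If the signature (Op, Ar) contains a nullary operation (a₀ with Ar a₀ = 𝟘) and a binary operation (a₂ with Ar a₂ = 𝟚), then the W-type Size for (Op, Ar) equipped with the plump order < is a type of sizes: < is transitive and well-founded, there is a distinguished element 0ˢ = σ a₀ !, and the binary operation i ⊔ˢ j = σ a₂ (b_{i,j}) (with b_{i,j} 0 = i, b_{i,j} 1 = j) satisfies i < i ⊔ˢ j and j < i ⊔ˢ j. -/
import Mathlib


universe u

/-- The W-type for the signature `(Op, Ar)`. -/
inductive SizeW (Op : Type u) (Ar : Op → Type u) : Type u
  | σ : (a : Op) → (Ar a → SizeW Op Ar) → SizeW Op Ar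

mutual
  /-- Taylor's plump strict order: `i < σ a b` as soon as `i ≤ b x` for some
  `x : Ar a`. (`PlumpLt`/`PlumpLe` are the least relations closed under the two
  displayed rules, as inductively defined predicates.) -/
  inductive PlumpLt {Op : Type u} {Ar : Op → Type u} :
      SizeW Op Ar → SizeW Op Ar → Prop
    | intro {i : SizeW Op Ar} {a : Op} {b : Ar a → SizeW Op Ar} (x : Ar a) :
        PlumpLe i (b x) → PlumpLt i (SizeW.σ a b)
  /-- Plump order: `σ a b ≤ i` as soon as `b x < i` for all `x : Ar a`. -/
  inductive PlumpLe {Op : Type u} {Ar : Op → Type u} :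
      SizeW Op Ar → SizeW Op Ar → Prop
    | intro {a : Op} {b : Ar a → SizeW Op Ar} {i : SizeW Op Ar} :
        (∀ x : Ar a, PlumpLt (b x) i) → PlumpLe (SizeW.σ a b) i
end

section PlumpAux
variable {Op : Type u} {Ar : Op → Type u}

theorem plump_trans_aux (j : SizeW Op Ar) :
    (∀ i k, PlumpLt i j → PlumpLe j k → PlumpLt i k) ∧
    (∀ i k, PlumpLe i j → PlumpLe j k → PlumpLe i k) ∧
    (∀ i k, PlumpLe i j → PlumpLt j k → PlumpLt i k) := by
  induction j with
  | σ a b ih =>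
    have h1 : ∀ i k, PlumpLt i (SizeW.σ a b) → PlumpLe (SizeW.σ a b) k → PlumpLt i k := by
      intro i k hlt hle
      cases hlt with
      | intro x hx =>
        cases hle with
        | intro h => exact (ih x).2.2 i k hx (h x)
    have h2 : ∀ i k, PlumpLe i (SizeW.σ a b) → PlumpLe (SizeW.σ a b) k → PlumpLe i k := by
      intro i k hle hle'
      cases hle with
      | intro h => exact PlumpLe.intro fun x => h1 _ k (h x) hle'
    refine ⟨h1, h2, ?_⟩
    intro i k hle hlt
    cases hlt with
    | intro x hx => exact PlumpLt.intro x (h2 i _ hle hx)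

theorem plump_le_refl (i : SizeW Op Ar) : PlumpLe i i := by
  induction i with
  | σ a b ih => exact PlumpLe.intro fun x => PlumpLt.intro x (ih x)

theorem plump_lt_le (j : SizeW Op Ar) : ∀ i, PlumpLt i j → PlumpLe i j := by
  induction j with
  | σ a b ih =>
    intro i h
    cases h with
    | intro x hx =>
      cases hx with
      | intro h' =>
        exact PlumpLe.intro fun y =>
          PlumpLt.intro x (ih x _ (h' y))

theorem plump_lt_trans {i j k : SizeW Op Ar} (h : PlumpLt i j) (h' : PlumpLt j k) :
    PlumpLt i k := by
  cases h' with
  | intro x hx =>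
    exact PlumpLt.intro x (plump_lt_le _ _ ((plump_trans_aux j).1 i _ h hx))

theorem plump_acc_of_le {i j : SizeW Op Ar} (h : PlumpLe i j)
    (hj : Acc (@PlumpLt Op Ar) j) : Acc (@PlumpLt Op Ar) i := by
  refine Acc.intro i fun k hk => ?_
  exact hj.inv ((plump_trans_aux i).1 k j hk h)

theorem plump_acc (i : SizeW Op Ar) : Acc (@PlumpLt Op Ar) i := by
  induction i with
  | σ a b ih =>
    refine Acc.intro _ fun k hk => ?_
    cases hk with
    | intro x hx => exact plump_acc_of_le hx (ih x)

end PlumpAux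

/-- if the signature `(Op, Ar)` has a nullary operation `a₀`
(with `Ar a₀ = 𝟘`) and a binary operation `a₂` (with `Ar a₂ = 𝟚`), then the
W-type with the plump order is a type of sizes: `<` is transitive and
well-founded, there is a distinguished element `0ˢ = σ a₀ !`, and
`i ⊔ˢ j := σ a₂ b_{i,j}` (with `b_{i,j} 0 = i`, `b_{i,j} 1 = j`) is a strict
upper bound of `i` and `j`. -/
theorem plump_type_of_sizes (Op : Type u) (Ar : Op → Type u)
    (a₀ : Op) (h₀ : IsEmpty (Ar a₀)) (a₂ : Op) (e : Ar a₂ ≃ Bool) :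
    (∀ i j k : SizeW Op Ar, PlumpLt i j → PlumpLt j k → PlumpLt i k) ∧
    (∀ φ : SizeW Op Ar → Prop,
      (∀ i, (∀ j, PlumpLt j i → φ j) → φ i) → ∀ i, φ i) ∧
    (∃ z : SizeW Op Ar, z = SizeW.σ a₀ (fun x => (h₀.false x).elim)) ∧
    (∀ i j : SizeW Op Ar,
      PlumpLt i (SizeW.σ a₂ (fun x => bif e x then j else i)) ∧
      PlumpLt j (SizeW.σ a₂ (fun x => bif e x then j else i))) := by
  refine ⟨fun i j k => plump_lt_trans, ?_, ⟨_, rfl⟩, ?_⟩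
  · intro φ hφ i
    exact (plump_acc i).recOn (fun i _ ih => hφ i ih)
  · intro i j
    constructor
    · refine PlumpLt.intro (e.symm false) ?_
      simp only [Equiv.apply_symm_apply, cond_false]
      exact plump_le_refl i
    · refine PlumpLt.intro (e.symm true) ?_
      simp only [Equiv.apply_symm_apply, cond_true]
      exact plump_le_refl j
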